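/- arXiv:2005.13898 — 2 statements merged into one kernel-verified Lean document; each statement's English description precedes it below -/
import Mathlib

section
/- For every integer n > K, the expected conditional CRI length under fair splitting (p = 1/2) satisfies L_n = 1 - C(n,K) · ∑_{j=1}^{n-K} [2 · j · (-1)^j · C(n-K, j)] / [(j+K) · (1 - 2^{-(j+K)+1})]. -/
/-!
Expand `L` in the Newton basis, `L n = ∑_{m ≤ n} C(n,m) λ_m`. Since
`∑_i C(n,i) C(i,m) = C(n,m) 2^(n-m)`, the recursion `L n = 1 + 2^(1-n) ∑_i C(n,i) L i` becomes
`∑_m C(n,m) (1 - 2^(1-m)) λ_m = 1` for `n > K`. With `λ_0 = 1` it is solved by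
`λ_(r+1) = 2 (-1)^(K+r) C(r,K) / (1 - 2^(-r))`, because of the alternating sum
`∑_{r<n} (-1)^r C(n,r+1) C(r,K) = (-1)^K` for `K < n`. The solution is unique since
`2^(1-n) < 1` for `n ≥ 2`, and substituting `r = K + j - 1` with
`(K+j) C(n,K+j) C(K+j-1,K) = j C(n,K) C(n-K,j)` gives the closed form.
-/

open Finset

theorem Nat.sum_range_choose_mul_choose_mul {R : Type*} [CommSemiring R] (f : ℕ → R) {n m : ℕ}
    (hmn : m ≤ n) :
    ∑ i ∈ range (n + 1), (n.choose i * i.choose m : R) * f i =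
      n.choose m * ∑ s ∈ range (n - m + 1), ((n - m).choose s : R) * f (m + s) := by
  rw [show n + 1 = m + (n - m + 1) by omega, sum_range_add, mul_sum,
    sum_eq_zero fun i hi => by simp [Nat.choose_eq_zero_of_lt (mem_range.1 hi)], zero_add]
  refine sum_congr rfl fun s _ => ?_
  have h := Nat.choose_mul (n := n) (Nat.le_add_right m s)
  rw [Nat.add_sub_cancel_left] at h
  rw [← mul_assoc, ← Nat.cast_mul, h, Nat.cast_mul]

theorem Int.alternating_sum_range_choose_mul_choose {n m : ℕ} (hmn : m < n) :
    ∑ i ∈ Finset.range (n + 1), (n.choose i * i.choose m : ℤ) * (-1) ^ i = 0 := by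
  have h := Int.alternating_sum_range_choose_of_ne (n := n - m) (by omega)
  rw [Nat.sum_range_choose_mul_choose_mul _ hmn.le]
  calc _ = (n.choose m * (-1) ^ m : ℤ) *
        ∑ s ∈ Finset.range (n - m + 1), (-1) ^ s * ((n - m).choose s : ℤ) := by
          simp only [mul_sum]
          exact sum_congr rfl fun s _ => by ring
    _ = 0 := by rw [h, mul_zero]

theorem Int.alternating_sum_range_choose_succ_mul_choose {n K : ℕ} (hKn : K < n) :
    ∑ r ∈ Finset.range n, (-1 : ℤ) ^ r * n.choose (r + 1) * r.choose K = (-1) ^ K := by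
  induction n, hKn using Nat.le_induction with
  | base =>
    rw [sum_range_succ, sum_eq_zero fun r hr => by simp [Nat.choose_eq_zero_of_lt (mem_range.1 hr)]]
    simp
  | succ n hKn ih =>
    have hpascal : ∀ r ∈ Finset.range (n + 1),
        (-1) ^ r * ((n + 1).choose (r + 1) : ℤ) * r.choose K =
        (n.choose r * r.choose K : ℤ) * (-1) ^ r + (-1) ^ r * n.choose (r + 1) * r.choose K :=
      fun r _ => by push_cast [Nat.choose_succ_succ']; ring
    rw [sum_congr rfl hpascal, sum_add_distrib, Int.alternating_sum_range_choose_mul_choose hKn,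
      sum_range_succ, ih, Nat.choose_succ_self]
    simp

theorem Nat.sum_range_choose_mul_sum_range_choose_mul {R : Type*} [CommSemiring R] (a : ℕ → R)
    (n : ℕ) :
    ∑ i ∈ range (n + 1), (n.choose i : R) * ∑ m ∈ range (i + 1), (i.choose m : R) * a m =
      ∑ m ∈ range (n + 1), (n.choose m : R) * 2 ^ (n - m) * a m := by
  have hextend : ∀ i ∈ range (n + 1), ∑ m ∈ range (i + 1), (i.choose m : R) * a m =
      ∑ m ∈ range (n + 1), (i.choose m : R) * a m := fun i hi =>
    sum_subset (range_subset_range.2 (by simpa using hi)) fun m _ hm => by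
      simp [Nat.choose_eq_zero_of_lt (by simpa using hm : i < m)]
  rw [sum_congr rfl fun i hi => by rw [hextend i hi, mul_sum], sum_comm]
  refine sum_congr rfl fun m hm => ?_
  have h := Nat.sum_range_choose_mul_choose_mul (fun _ => a m) (Nat.lt_succ_iff.1 (mem_range.1 hm))
  rw [← sum_mul, ← sum_mul, ← Nat.cast_sum, Nat.sum_range_choose, Nat.cast_pow,
    Nat.cast_ofNat] at h
  rw [mul_assoc, ← h, sum_mul]
  exact sum_congr rfl fun i _ => by ring

theorem Nat.sum_range_choose_mul_add_sub {M : Type*} [NonAssocSemiring M] (f : ℕ → M)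
    (n : ℕ) :
    ∑ i ∈ range (n + 1), (n.choose i : M) * (f i + f (n - i)) =
      2 * ∑ i ∈ range (n + 1), (n.choose i : M) * f i := by
  have hreflect : ∑ i ∈ range (n + 1), (n.choose i : M) * f (n - i) =
      ∑ i ∈ range (n + 1), (n.choose i : M) * f i := by
    rw [← sum_range_reflect]
    refine sum_congr rfl fun i hi => ?_
    have hi : i ≤ n := Nat.lt_succ_iff.1 (mem_range.1 hi)
    rw [Nat.add_sub_cancel, Nat.sub_sub_self hi, Nat.choose_symm hi]
  simp only [mul_add, sum_add_distrib, hreflect, two_mul]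

theorem Nat.succ_mul_choose_mul_choose {n K s : ℕ} :
    (K + s + 1) * (n.choose (K + s + 1) * (K + s).choose K) =
      (s + 1) * (n.choose K * (n - K).choose (s + 1)) := by
  have h := Nat.choose_mul_succ_eq (K + s) K
  have h2 := Nat.choose_mul (n := n) (k := K + s + 1) (s := K) (by omega)
  rw [show K + s + 1 - K = s + 1 by omega] at h h2
  rw [← h2, mul_comm (K + s + 1), mul_assoc, h]
  ring

/-- The CRI recursion with `p = 1/2`, the terms `L i` and `L (n - i)` paired by
`C(n,i) = C(n,n-i)`. -/
def SolvesFairCRI (K : ℕ) (L : ℕ → ℝ) : Prop :=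
  (∀ n ≤ K, L n = 1) ∧
    ∀ n, K < n → L n = 1 + 2 * (1 / 2) ^ n * ∑ i ∈ range (n + 1), (n.choose i : ℝ) * L i

theorem SolvesFairCRI.unique {K : ℕ} (hK : 1 ≤ K) {L M : ℕ → ℝ} (hL : SolvesFairCRI K L)
    (hM : SolvesFairCRI K M) : L = M := by
  funext n
  induction n using Nat.strong_induction_on with
  | _ n ih =>
  rcases le_or_gt n K with hn | hn
  · rw [hL.1 n hn, hM.1 n hn]
  have hlower :
      ∑ i ∈ range n, (n.choose i : ℝ) * L i = ∑ i ∈ range n, (n.choose i : ℝ) * M i :=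
    sum_congr rfl fun i hi => by rw [ih i (mem_range.1 hi)]
  have hLn := hL.2 n hn
  have hMn := hM.2 n hn
  rw [sum_range_succ, Nat.choose_self, Nat.cast_one, one_mul] at hLn hMn
  rw [hlower] at hLn
  have hcontract : 2 * (1 / 2 : ℝ) ^ n < 1 := by
    rw [← Nat.sub_add_cancel (show 1 ≤ n by omega), pow_succ, mul_left_comm]
    have : (1 / 2 : ℝ) ^ (n - 1) < 1 := pow_lt_one₀ (by norm_num) (by norm_num) (by omega)
    nlinarith
  have h : (1 - 2 * (1 / 2 : ℝ) ^ n) * (L n - M n) = 0 := by linear_combination hLn - hMn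
  exact sub_eq_zero.1 ((mul_eq_zero.1 h).resolve_left (by linarith))

/-- The coefficient `λ_m` of the header. At `m = 1` the denominator vanishes, but so does
`C(0,K)` for `K ≥ 1`. -/
noncomputable def criCoeff (K : ℕ) : ℕ → ℝ
  | 0 => 1
  | r + 1 => 2 * (-1) ^ (K + r) * r.choose K / (1 - (1 / 2) ^ r)

noncomputable def criLength (K n : ℕ) : ℝ :=
  ∑ m ∈ range (n + 1), (n.choose m : ℝ) * criCoeff K m

theorem criCoeff_succ_of_lt {K r : ℕ} (hr : r < K) : criCoeff K (r + 1) = 0 := by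
  simp [criCoeff, Nat.choose_eq_zero_of_lt hr]

theorem one_sub_half_pow_mul_criCoeff_succ {K : ℕ} (hK : 1 ≤ K) (r : ℕ) :
    (1 - (1 / 2 : ℝ) ^ r) * criCoeff K (r + 1) = 2 * (-1) ^ (K + r) * r.choose K := by
  rcases r with _ | r
  · simp [Nat.choose_eq_zero_of_lt hK]
  have hpos : 0 < 1 - (1 / 2 : ℝ) ^ (r + 1) :=
    sub_pos.2 (pow_lt_one₀ (by norm_num) (by norm_num) (by omega))
  rw [criCoeff, mul_div_cancel₀ _ hpos.ne']

theorem criLength_eq_one_add {K : ℕ} (n : ℕ) :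
    criLength K n = 1 + ∑ r ∈ range n, (n.choose (r + 1) : ℝ) * criCoeff K (r + 1) := by
  rw [criLength, sum_range_succ', add_comm]
  simp [criCoeff]

theorem solvesFairCRI_criLength {K : ℕ} (hK : 1 ≤ K) : SolvesFairCRI K (criLength K) := by
  refine ⟨fun n hn => ?_, fun n hn => ?_⟩
  · rw [criLength_eq_one_add, sum_eq_zero fun r hr => ?_, add_zero]
    rw [criCoeff_succ_of_lt (by simp at hr; omega), mul_zero]
  have hdouble :
      2 * (1 / 2 : ℝ) ^ n * ∑ i ∈ range (n + 1), (n.choose i : ℝ) * criLength K i =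
      ∑ m ∈ range (n + 1), (n.choose m : ℝ) * (2 * (1 / 2) ^ m) * criCoeff K m := by
    simp only [criLength]
    rw [Nat.sum_range_choose_mul_sum_range_choose_mul, mul_sum]
    refine sum_congr rfl fun m hm => ?_
    have hpow := pow_mul_pow_sub (1 / 2 : ℝ) (Nat.lt_succ_iff.1 (mem_range.1 hm))
    have hcancel : (1 / 2 : ℝ) ^ (n - m) * 2 ^ (n - m) = 1 := by rw [← mul_pow]; norm_num
    rw [← hpow]
    linear_combination (2 * (1 / 2) ^ m * n.choose m * criCoeff K m : ℝ) * hcancel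
  have halt : ∑ r ∈ range n, (-1 : ℝ) ^ r * n.choose (r + 1) * r.choose K = (-1) ^ K := by
    exact_mod_cast Int.alternating_sum_range_choose_succ_mul_choose hn
  have hsum : ∑ r ∈ range n, (n.choose (r + 1) : ℝ) * criCoeff K (r + 1) -
      ∑ r ∈ range n, (n.choose (r + 1) : ℝ) * (2 * (1 / 2) ^ (r + 1)) * criCoeff K (r + 1) =
        2 := by
    calc _ = ∑ r ∈ range n,
          (n.choose (r + 1) : ℝ) * ((1 - (1 / 2) ^ r) * criCoeff K (r + 1)) := by
          rw [← sum_sub_distrib]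
          exact sum_congr rfl fun r _ => by ring
      _ = 2 * (-1) ^ K * ∑ r ∈ range n, (-1 : ℝ) ^ r * n.choose (r + 1) * r.choose K := by
          simp only [one_sub_half_pow_mul_criCoeff_succ hK, mul_sum]
          exact sum_congr rfl fun r _ => by ring
      _ = 2 := by rw [halt, mul_assoc, ← mul_pow]; norm_num
  rw [hdouble, criLength, sum_range_succ', sum_range_succ']
  simp only [criCoeff.eq_1, Nat.choose_zero_right, Nat.cast_one, pow_zero]
  linear_combination hsum

theorem choose_mul_criCoeff_add_succ {K : ℕ} (hK : 1 ≤ K) (n s : ℕ) :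
    (n.choose (K + s + 1) : ℝ) * criCoeff K (K + s + 1) =
      -((n.choose K : ℝ) *
        ((2 * ((s + 1 : ℕ) : ℝ) * (-1 : ℝ) ^ (s + 1) * ((n - K).choose (s + 1) : ℝ)) /
          ((((s + 1 : ℕ) : ℝ) + (K : ℝ)) *
            (1 - (2 : ℝ) ^ (-(((s + 1 : ℕ) : ℤ) + (K : ℤ)) + 1))))) := by
  have hzpow : (2 : ℝ) ^ (-(((s + 1 : ℕ) : ℤ) + (K : ℤ)) + 1) = (1 / 2) ^ (K + s) := by
    rw [show -(((s + 1 : ℕ) : ℤ) + (K : ℤ)) + 1 = -((K + s : ℕ) : ℤ) by push_cast; ring,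
      zpow_neg, zpow_natCast, one_div, inv_pow]
  have hsign : (-1 : ℝ) ^ (K + (K + s)) = (-1) ^ s := by
    rw [← add_assoc, ← two_mul, pow_add, pow_mul, neg_one_sq, one_pow, one_mul]
  have hpos : 0 < 1 - (1 / 2 : ℝ) ^ (K + s) :=
    sub_pos.2 (pow_lt_one₀ (by norm_num) (by norm_num) (by omega))
  have hchoose : ((K + s + 1 : ℕ) : ℝ) * (n.choose (K + s + 1) * (K + s).choose K) =
      ((s + 1 : ℕ) : ℝ) * (n.choose K * (n - K).choose (s + 1)) := by
    exact_mod_cast Nat.succ_mul_choose_mul_choose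
  rw [hzpow, criCoeff, hsign]
  push_cast at hchoose ⊢
  field_simp
  linear_combination (-1 : ℝ) ^ s * hchoose

theorem criLength_eq {K n : ℕ} (hK : 1 ≤ K) (hKn : K ≤ n) :
    criLength K n = 1 - (n.choose K : ℝ) * ∑ j ∈ Icc 1 (n - K),
        (2 * (j : ℝ) * (-1 : ℝ) ^ j * ((n - K).choose j : ℝ)) /
          (((j : ℝ) + (K : ℝ)) * (1 - (2 : ℝ) ^ (-(((j : ℤ)) + (K : ℤ)) + 1))) := by
  have hreindex (f : ℕ → ℝ) :
      ∑ j ∈ Icc 1 (n - K), f j = ∑ s ∈ range (n - K), f (s + 1) := by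
    rw [range_eq_Ico, sum_Ico_add' f 0 (n - K) 1, zero_add, Ico_add_one_right_eq_Icc]
  rw [criLength_eq_one_add, show range n = range (K + (n - K)) by rw [Nat.add_sub_cancel' hKn],
    sum_range_add, sum_eq_zero fun r hr => by rw [criCoeff_succ_of_lt (mem_range.1 hr), mul_zero],
    zero_add, hreindex, mul_sum, sub_eq_add_neg, ← sum_neg_distrib]
  exact congrArg _ (sum_congr rfl fun s _ => choose_mul_criCoeff_add_succ hK n s)

theorem bta_cri_closed_form_fair
    (K : ℕ) (hK : 1 ≤ K)
    (L : ℕ → ℝ)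
    (hL1 : ∀ n, n ≤ K → L n = 1)
    (hL2 : ∀ n, K < n → L n = 1 + ∑ i ∈ Finset.range (n + 1),
        (n.choose i : ℝ) * (1 / 2 : ℝ) ^ i * (1 - (1 / 2 : ℝ)) ^ (n - i) * (L i + L (n - i)))
    (n : ℕ) (hn : K < n) :
    L n = 1 - (n.choose K : ℝ) * ∑ j ∈ Finset.Icc 1 (n - K),
        (2 * (j : ℝ) * (-1 : ℝ) ^ j * ((n - K).choose j : ℝ)) /
          (((j : ℝ) + (K : ℝ)) * (1 - (2 : ℝ) ^ (-(((j : ℤ)) + (K : ℤ)) + 1))) := by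
  have hL : SolvesFairCRI K L := by
    refine ⟨hL1, fun m hm => ?_⟩
    rw [hL2 m hm, mul_comm (2 : ℝ), mul_assoc, ← Nat.sum_range_choose_mul_add_sub, mul_sum]
    refine congrArg _ (sum_congr rfl fun i hi => ?_)
    rw [← pow_mul_pow_sub (1 / 2 : ℝ) (Nat.lt_succ_iff.1 (mem_range.1 hi))]
    ring
  rw [hL.unique hK (solvesFairCRI_criLength hK), criLength_eq hK hn.le]
end

section
/- Suppose 0 ≤ z ≤ 1 and q : ℕ → ℝ satisfies 0 ≤ q_n ≤ 1 for all n, q_n = z for all n ≤ K, and q_n = z · ∑_{i=0}^{n} C(n,i) · p^i · (1-p)^{n-i} · q_i · q_{n-i} for all n > K. Define Q(x) = e^{-x} · ∑_{n=0}^{∞} q_n · x^n / n! for x ≥ 0 (the probability generating function of the CRI length at argument z, Poisson-averaged with mean x). Then for every x ≥ 0, Q(x) = z · Q(p·x) · Q((1-p)·x) + (z - z^3) · e^{-x} · ∑_{k=0}^{K} x^k / k!. -/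
/-!
Writing `E a y = ∑ aₙ yⁿ / n!`, the Cauchy product of `E a (s x)` and `E b (t x)` is the
exponential series in `x` whose `n`-th coefficient is the binomial convolution
`∑ C(n,i) sⁱ tⁿ⁻ⁱ aᵢ bₙ₋ᵢ`. With `s = p`, `t = 1 - p` the recurrence says that
`qₙ = z · (q ⋆ q)ₙ` for `n > K`, while for `n ≤ K` the binomial theorem gives
`(q ⋆ q)ₙ = z²`, so `qₙ = z · (q ⋆ q)ₙ + (z - z³)`. Summing against `xⁿ / n!` and
using `e^{-x} = e^{-p x} e^{-(1-p) x}` gives the functional equation.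
-/

open Finset

def binomialConvolution (s t : ℝ) (a b : ℕ → ℝ) (n : ℕ) : ℝ :=
  ∑ i ∈ range (n + 1), (n.choose i : ℝ) * s ^ i * t ^ (n - i) * a i * b (n - i)

theorem summable_norm_mul_pow_div_factorial {a : ℕ → ℝ} {C : ℝ} (ha : ∀ n, |a n| ≤ C)
    (y : ℝ) : Summable fun n => ‖a n * y ^ n / n.factorial‖ := by
  refine Summable.of_nonneg_of_le (fun n => norm_nonneg _) (fun n => ?_)
    ((Real.summable_pow_div_factorial |y|).mul_left C)
  rw [Real.norm_eq_abs, abs_div, abs_mul, abs_pow, Nat.abs_cast, mul_div_assoc]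
  gcongr
  exact ha n

theorem mul_pow_div_factorial_mul_mul_pow_div_factorial {n i : ℕ} (hi : i ≤ n)
    (α β s t x : ℝ) :
    α * (s * x) ^ i / i.factorial * (β * (t * x) ^ (n - i) / (n - i).factorial)
      = (n.choose i : ℝ) * s ^ i * t ^ (n - i) * α * β * (x ^ n / n.factorial) := by
  have hx : x ^ n = x ^ i * x ^ (n - i) := by rw [← pow_add, Nat.add_sub_cancel' hi]
  rw [Nat.cast_choose ℝ hi, hx, mul_pow, mul_pow]
  field_simp

theorem hasSum_binomialConvolution_mul_pow_div_factorial {a b : ℕ → ℝ} {C D : ℝ}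
    (ha : ∀ n, |a n| ≤ C) (hb : ∀ n, |b n| ≤ D) (s t x : ℝ) :
    HasSum (fun n => binomialConvolution s t a b n * x ^ n / n.factorial)
      ((∑' n, a n * (s * x) ^ n / n.factorial) * ∑' n, b n * (t * x) ^ n / n.factorial) := by
  have hsa := summable_norm_mul_pow_div_factorial ha (s * x)
  have hsb := summable_norm_mul_pow_div_factorial hb (t * x)
  have hterm : ∀ n, ∑ i ∈ range (n + 1), a i * (s * x) ^ i / i.factorial
        * (b (n - i) * (t * x) ^ (n - i) / (n - i).factorial)
      = binomialConvolution s t a b n * x ^ n / n.factorial := by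
    intro n
    rw [binomialConvolution, mul_div_assoc, sum_mul]
    refine sum_congr rfl fun i hi => ?_
    exact mul_pow_div_factorial_mul_mul_pow_div_factorial
      (Nat.lt_succ_iff.mp (mem_range.mp hi)) _ _ _ _ _
  rw [tsum_mul_tsum_eq_tsum_sum_range_of_summable_norm hsa hsb]
  simp_rw [← hterm]
  exact (summable_norm_sum_mul_range_of_summable_norm hsa hsb).of_norm.hasSum

theorem sum_choose_mul_pow_mul_one_sub_pow (p : ℝ) (n : ℕ) :
    ∑ i ∈ range (n + 1), (n.choose i : ℝ) * p ^ i * (1 - p) ^ (n - i) = 1 := by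
  have h := (add_pow p (1 - p) n).symm
  rw [add_sub_cancel, one_pow] at h
  refine Eq.trans (sum_congr rfl fun i _ => ?_) h
  ring

theorem eq_mul_binomialConvolution_add_ite {K : ℕ} {p z : ℝ} {q : ℕ → ℝ}
    (hq1 : ∀ n, n ≤ K → q n = z)
    (hq2 : ∀ n, K < n → q n = z * binomialConvolution p (1 - p) q q n) (n : ℕ) :
    q n = z * binomialConvolution p (1 - p) q q n + if n ≤ K then z - z ^ 3 else 0 := by
  by_cases hn : n ≤ K
  · have hconv : binomialConvolution p (1 - p) q q n = z ^ 2 := calc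
      _ = z ^ 2 * ∑ i ∈ range (n + 1), (n.choose i : ℝ) * p ^ i * (1 - p) ^ (n - i) := by
        rw [binomialConvolution, mul_sum]
        refine sum_congr rfl fun i hi => ?_
        have hi : i ≤ n := Nat.lt_succ_iff.mp (mem_range.mp hi)
        rw [hq1 i (hi.trans hn), hq1 (n - i) ((Nat.sub_le n i).trans hn)]
        ring
      _ = z ^ 2 := by rw [sum_choose_mul_pow_mul_one_sub_pow, mul_one]
    rw [hconv, hq1 n hn, if_pos hn]
    ring
  · rw [if_neg hn, add_zero]
    exact hq2 n (not_le.mp hn)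

theorem hasSum_ite_le_mul_pow_div_factorial (K : ℕ) (w x : ℝ) :
    HasSum (fun n => (if n ≤ K then w else 0) * x ^ n / n.factorial)
      (w * ∑ k ∈ range (K + 1), x ^ k / k.factorial) := by
  have hvanish : ∀ n ∉ range (K + 1), (if n ≤ K then w else 0) * x ^ n / n.factorial = 0 := by
    intro n hn
    rw [mem_range, Nat.lt_succ_iff] at hn
    rw [if_neg hn, zero_mul, zero_div]
  have hsum : w * ∑ k ∈ range (K + 1), x ^ k / k.factorial
      = ∑ n ∈ range (K + 1), (if n ≤ K then w else 0) * x ^ n / n.factorial := by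
    rw [mul_sum]
    refine sum_congr rfl fun k hk => ?_
    rw [if_pos (Nat.lt_succ_iff.mp (mem_range.mp hk)), mul_div_assoc]
  rw [hsum]
  exact hasSum_sum_of_ne_finset_zero hvanish

theorem poisson_pgf_functional_equation_general
    (K : ℕ) (p : ℝ)
    (z : ℝ)
    (q : ℕ → ℝ)
    (hq01 : ∀ n, 0 ≤ q n ∧ q n ≤ 1)
    (hq1 : ∀ n, n ≤ K → q n = z)
    (hq2 : ∀ n, K < n → q n = z * ∑ i ∈ Finset.range (n + 1),
        (n.choose i : ℝ) * p ^ i * (1 - p) ^ (n - i) * q i * q (n - i))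
    (Q : ℝ → ℝ)
    (hQ : ∀ x : ℝ, Q x = Real.exp (-x) * ∑' n : ℕ, q n * x ^ n / (n.factorial : ℝ)) :
    ∀ x : ℝ, 0 ≤ x →
      Q x = z * Q (p * x) * Q ((1 - p) * x)
            + (z - z ^ 3) * Real.exp (-x) *
                ∑ k ∈ Finset.range (K + 1), x ^ k / (k.factorial : ℝ) := by
  intro x _
  have hq : ∀ n, |q n| ≤ 1 := fun n => abs_le.2 ⟨by linarith [(hq01 n).1], (hq01 n).2⟩
  have hseries := ((hasSum_binomialConvolution_mul_pow_div_factorial hq hq p (1 - p) x).mul_left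
    z).add (hasSum_ite_le_mul_pow_div_factorial K (z - z ^ 3) x)
  have hterms : (fun n => q n * x ^ n / n.factorial) = fun n =>
      z * (binomialConvolution p (1 - p) q q n * x ^ n / n.factorial)
        + (if n ≤ K then z - z ^ 3 else 0) * x ^ n / n.factorial := by
    funext n
    rw [eq_mul_binomialConvolution_add_ite hq1 hq2 n]
    ring
  have hexp : Real.exp (-x) = Real.exp (-(p * x)) * Real.exp (-((1 - p) * x)) := by
    rw [← Real.exp_add]; ring_nf
  rw [hQ, hQ, hQ, hterms, hseries.tsum_eq, hexp]
  ring

theorem poisson_pgf_functional_equation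
    (K : ℕ) (hK : 1 ≤ K) (p : ℝ) (hp0 : 0 < p) (hp1 : p < 1)
    (z : ℝ) (hz0 : 0 ≤ z) (hz1 : z ≤ 1)
    (q : ℕ → ℝ)
    (hq01 : ∀ n, 0 ≤ q n ∧ q n ≤ 1)
    (hq1 : ∀ n, n ≤ K → q n = z)
    (hq2 : ∀ n, K < n → q n = z * ∑ i ∈ Finset.range (n + 1),
        (n.choose i : ℝ) * p ^ i * (1 - p) ^ (n - i) * q i * q (n - i))
    (Q : ℝ → ℝ)
    (hQ : ∀ x : ℝ, Q x = Real.exp (-x) * ∑' n : ℕ, q n * x ^ n / (n.factorial : ℝ)) :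
    ∀ x : ℝ, 0 ≤ x →
      Q x = z * Q (p * x) * Q ((1 - p) * x)
            + (z - z ^ 3) * Real.exp (-x) *
                ∑ k ∈ Finset.range (K + 1), x ^ k / (k.factorial : ℝ) :=
  poisson_pgf_functional_equation_general K p z q hq01 hq1 hq2 Q hQ
end
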